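/- arXiv:1907.11190 — 4 statements merged into one kernel-verified Lean document; each statement's English description precedes it below -/
import Mathlib

section
/- Let G be a finitely generated group. If the subgroup [G, G^φ] of ν(G) (the non-abelian tensor square of G) is finite, then G is finite. -/
/-!
The homomorphism `κ : ν(G) → G` identifying both copies of `G` maps `[G, G^φ]` onto `G'`, so `G'`
is finite. If `G/G'` were infinite, being finitely generated abelian it would surject onto `ℤ`
through some `F`; then `g ↦ (F g, 0, 0)`, `g^φ ↦ (0, F g, 0)` extends to a homomorphism of `ν(G)`
into the Heisenberg group sending `[g, h^φ]` to the central element `F g * F h`, which makes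
`[G, G^φ]` infinite. So `G'` and `G/G'` are both finite.
-/

namespace TensorNu

universe u

/-- The commutator `[x,y] = x⁻¹y⁻¹xy`. -/
def comm {K : Type*} [Group K] (x y : K) : K := x⁻¹ * y⁻¹ * x * y

/-- Conjugation `x^y = y⁻¹xy`. -/
def conj {K : Type*} [Group K] (x y : K) : K := y⁻¹ * x * y

variable (G : Type u) [Group G]

/-- The defining relators of `ν(G)`, as elements of the free group on `G ⊕ G`,
where `Sum.inl` corresponds to the canonical copy of `G` and `Sum.inr` to the
isomorphic copy `G^φ` (`g ↦ g^φ`).  They comprise the multiplication tables of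
`G` and of `G^φ`, together with the relations
`[g₁,g₂^φ]^{g₃} = [g₁^{g₃},(g₂^{g₃})^φ]` and `[g₁,g₂^φ]^{g₃} = [g₁,g₂^φ]^{g₃^φ}`. -/
def nuRels : Set (FreeGroup (G ⊕ G)) :=
  {r | (∃ g h : G, r = FreeGroup.of (Sum.inl g) * FreeGroup.of (Sum.inl h) *
          (FreeGroup.of (Sum.inl (g * h)))⁻¹)
     ∨ (∃ g h : G, r = FreeGroup.of (Sum.inr g) * FreeGroup.of (Sum.inr h) *
          (FreeGroup.of (Sum.inr (g * h)))⁻¹)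
     ∨ (∃ g₁ g₂ g₃ : G, r =
          conj (comm (FreeGroup.of (Sum.inl g₁)) (FreeGroup.of (Sum.inr g₂)))
              (FreeGroup.of (Sum.inl g₃)) *
            (comm (FreeGroup.of (Sum.inl (conj g₁ g₃)))
              (FreeGroup.of (Sum.inr (conj g₂ g₃))))⁻¹)
     ∨ (∃ g₁ g₂ g₃ : G, r =
          conj (comm (FreeGroup.of (Sum.inl g₁)) (FreeGroup.of (Sum.inr g₂)))
              (FreeGroup.of (Sum.inl g₃)) *
            (conj (comm (FreeGroup.of (Sum.inl g₁)) (FreeGroup.of (Sum.inr g₂)))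
              (FreeGroup.of (Sum.inr g₃)))⁻¹)}

/-- The group `ν(G)`. -/
abbrev Nu := PresentedGroup (nuRels G)

/-- The canonical image of `g ∈ G` in `ν(G)`. -/
def ι (g : G) : Nu G := PresentedGroup.of (Sum.inl g)

/-- The canonical image `g^φ` of `g ∈ G` (via the copy `G^φ`) in `ν(G)`. -/
def ιφ (g : G) : Nu G := PresentedGroup.of (Sum.inr g)

/-- The set `T⊗(G)` of tensors `[a, b^φ]`, `a, b ∈ G`. -/
def tensorSet : Set (Nu G) := {x | ∃ a b : G, x = comm (ι G a) (ιφ G b)}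

/-- The image of `G` in `ν(G)` as a subgroup. -/
def GSub : Subgroup (Nu G) := Subgroup.closure (Set.range (ι G))

/-- The image of `G^φ` in `ν(G)` as a subgroup. -/
def GφSub : Subgroup (Nu G) := Subgroup.closure (Set.range (ιφ G))

/-- The non-abelian tensor square `[G, G^φ] ≤ ν(G)`. -/
def tensorSquare : Subgroup (Nu G) := ⁅GSub G, GφSub G⁆

/-- `[S, x]`: the subgroup generated by the commutators `[s, x]`, `s ∈ S`. -/
def commSub {K : Type*} [Group K] (S : Set K) (x : K) : Subgroup K :=
  Subgroup.closure {c | ∃ s ∈ S, c = comm s x}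

end TensorNu

lemma AddCommGroup.exists_surjective_int (A : Type*) [AddCommGroup A] [AddGroup.FG A]
    [Infinite A] : ∃ f : A →+ ℤ, Function.Surjective f := by
  obtain ⟨n, ι, _, p, hp, e, ⟨eqv⟩⟩ := AddCommGroup.equiv_free_prod_directSum_zmod A
  cases n with
  | zero =>
    have : ∀ i, NeZero (p i ^ e i) := fun i => ⟨pow_ne_zero _ (hp i).ne_zero⟩
    have : Finite (DirectSum ι fun i => ZMod (p i ^ e i)) :=
      Finite.of_equiv _ DFinsupp.equivFunOnFintype.symm
    have : Finite A := Finite.of_equiv _ eqv.symm.toEquiv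
    exact (not_finite A).elim
  | succ n =>
    exact ⟨((Finsupp.applyAddHom 0).comp (AddMonoidHom.fst _ _)).comp eqv.toAddMonoidHom,
      fun m => ⟨eqv.symm (Finsupp.single 0 m, 0), by simp⟩⟩

namespace TensorNu

section CommConj

variable {K L : Type*} [Group K] [Group L]

lemma map_comm (f : K →* L) (x y : K) : f (comm x y) = comm (f x) (f y) := by simp [comm]

lemma map_conj (f : K →* L) (x y : K) : f (conj x y) = conj (f x) (f y) := by simp [conj]

lemma conj_comm (x y z : K) : conj (comm x y) z = comm (conj x z) (conj y z) := by
  simp only [comm, conj]; group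

open scoped commutatorElement in
lemma comm_eq_commutatorElement (x y : K) : comm x y = ⁅x⁻¹, y⁻¹⁆ := by
  simp [comm, commutatorElement_def]

end CommConj

section Lift

variable {G : Type u} [Group G] {H : Type*} [Group H]

def nuLift (A B : G →* H)
    (hA : ∀ g₁ g₂ g₃ : G, conj (comm (A g₁) (B g₂)) (A g₃)
        = comm (conj (A g₁) (A g₃)) (conj (B g₂) (B g₃)))
    (hB : ∀ g₁ g₂ g₃ : G, conj (comm (A g₁) (B g₂)) (A g₃)
        = conj (comm (A g₁) (B g₂)) (B g₃)) :
    Nu G →* H :=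
  PresentedGroup.toGroup (f := Sum.elim A B) <| by
    rintro r (⟨g, h, rfl⟩ | ⟨g, h, rfl⟩ | ⟨g₁, g₂, g₃, rfl⟩ | ⟨g₁, g₂, g₃, rfl⟩) <;>
      simp only [map_mul, map_inv, map_conj, map_comm, FreeGroup.lift_apply_of,
        Sum.elim_inl, Sum.elim_inr, mul_inv_eq_one]
    exacts [hA g₁ g₂ g₃, hB g₁ g₂ g₃]

@[simp] lemma nuLift_ι (A B : G →* H) (hA hB) (g : G) : nuLift A B hA hB (ι G g) = A g :=
  PresentedGroup.toGroup.of _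

@[simp] lemma nuLift_ιφ (A B : G →* H) (hA hB) (g : G) : nuLift A B hA hB (ιφ G g) = B g :=
  PresentedGroup.toGroup.of _

end Lift

section Kappa

variable (G : Type u) [Group G]

lemma comm_mem_tensorSquare (g h : G) : comm (ι G g) (ιφ G h) ∈ tensorSquare G := by
  rw [comm_eq_commutatorElement, tensorSquare]
  exact Subgroup.commutator_mem_commutator
    (inv_mem (Subgroup.subset_closure ⟨g, rfl⟩)) (inv_mem (Subgroup.subset_closure ⟨h, rfl⟩))

def kappa : Nu G →* G :=
  nuLift (MonoidHom.id G) (MonoidHom.id G) (fun _ _ _ => conj_comm _ _ _) (fun _ _ _ => rfl)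

lemma map_kappa_GSub : (GSub G).map (kappa G) = ⊤ := by
  rw [GSub, MonoidHom.map_closure, ← Set.range_comp]
  simp [Function.comp_def, kappa]

lemma map_kappa_GφSub : (GφSub G).map (kappa G) = ⊤ := by
  rw [GφSub, MonoidHom.map_closure, ← Set.range_comp]
  simp [Function.comp_def, kappa]

lemma map_kappa_tensorSquare : (tensorSquare G).map (kappa G) = commutator G := by
  rw [tensorSquare, Subgroup.map_commutator, map_kappa_GSub, map_kappa_GφSub, commutator_def]

lemma finite_commutator_of_finite_tensorSquare [Finite (tensorSquare G)] :
    Finite (commutator G) := by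
  rw [← map_kappa_tensorSquare]
  exact Finite.of_surjective _ ((kappa G).subgroupMap_surjective (tensorSquare G))

end Kappa

/-- `⟨a, b, c⟩` is the unitriangular matrix `[[1, a, c], [0, 1, b], [0, 0, 1]]`. -/
@[ext] structure Heisenberg (R : Type*) where
  a : R
  b : R
  c : R

namespace Heisenberg

variable {R : Type*} [CommRing R]

instance : Mul (Heisenberg R) := ⟨fun p q => ⟨p.a + q.a, p.b + q.b, p.c + q.c + p.a * q.b⟩⟩
instance : One (Heisenberg R) := ⟨⟨0, 0, 0⟩⟩
instance : Inv (Heisenberg R) := ⟨fun p => ⟨-p.a, -p.b, -p.c + p.a * p.b⟩⟩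

@[simp] lemma mul_a (p q : Heisenberg R) : (p * q).a = p.a + q.a := rfl
@[simp] lemma mul_b (p q : Heisenberg R) : (p * q).b = p.b + q.b := rfl
@[simp] lemma mul_c (p q : Heisenberg R) : (p * q).c = p.c + q.c + p.a * q.b := rfl
@[simp] lemma one_a : (1 : Heisenberg R).a = 0 := rfl
@[simp] lemma one_b : (1 : Heisenberg R).b = 0 := rfl
@[simp] lemma one_c : (1 : Heisenberg R).c = 0 := rfl
@[simp] lemma inv_a (p : Heisenberg R) : p⁻¹.a = -p.a := rfl
@[simp] lemma inv_b (p : Heisenberg R) : p⁻¹.b = -p.b := rfl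
@[simp] lemma inv_c (p : Heisenberg R) : p⁻¹.c = -p.c + p.a * p.b := rfl

instance : Group (Heisenberg R) where
  mul_assoc p q r := by ext <;> simp <;> ring
  one_mul p := by ext <;> simp
  mul_one p := by ext <;> simp
  inv_mul_cancel p := by ext <;> simp

variable (R)

def inlHom : Multiplicative R →* Heisenberg R where
  toFun r := ⟨r.toAdd, 0, 0⟩
  map_one' := rfl
  map_mul' r s := by ext <;> simp

def inrHom : Multiplicative R →* Heisenberg R where
  toFun r := ⟨0, r.toAdd, 0⟩
  map_one' := rfl
  map_mul' r s := by ext <;> simp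

@[simp] lemma inlHom_apply (r : Multiplicative R) : inlHom R r = ⟨r.toAdd, 0, 0⟩ := rfl
@[simp] lemma inrHom_apply (r : Multiplicative R) : inrHom R r = ⟨0, r.toAdd, 0⟩ := rfl

end Heisenberg

section Heisenberg

open Heisenberg

variable {G : Type u} [Group G] {R : Type*} [CommRing R]

/-- The ν-relations hold because commutators are central in `Heisenberg R` and the images of
`inlHom` and `inrHom` are abelian. -/
def heisenbergHom (F : G →* Multiplicative R) : Nu G →* Heisenberg R :=
  nuLift ((inlHom R).comp F) ((inrHom R).comp F)
    (fun _ _ _ => by ext <;> simp [conj, comm])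
    (fun _ _ _ => by ext <;> simp [conj, comm])

lemma heisenbergHom_comm (F : G →* Multiplicative R) (g h : G) :
    heisenbergHom F (comm (ι G g) (ιφ G h)) = ⟨0, 0, (F g).toAdd * (F h).toAdd⟩ := by
  ext <;> simp [heisenbergHom, comm]

lemma infinite_tensorSquare_of_surjective [Infinite R] (F : G →* Multiplicative R)
    (hF : Function.Surjective F) : Infinite (tensorSquare G) := by
  obtain ⟨g₀, hg₀⟩ := hF (Multiplicative.ofAdd 1)
  refine Infinite.of_surjective (fun x : tensorSquare G => (heisenbergHom F x).c) fun r => ?_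
  obtain ⟨h, hh⟩ := hF (Multiplicative.ofAdd r)
  exact ⟨⟨_, comm_mem_tensorSquare G g₀ h⟩, by simp [heisenbergHom_comm, hg₀, hh]⟩

end Heisenberg

lemma finite_abelianization_of_finite_tensorSquare (G : Type u) [Group G] [Group.FG G]
    [Finite (tensorSquare G)] : Finite (Abelianization G) := by
  have hof : Function.Surjective (Abelianization.of : G →* Abelianization G) :=
    QuotientGroup.mk_surjective
  have : Group.FG (Abelianization G) := Group.fg_of_surjective hof
  by_contra hinf
  have : Infinite (Abelianization G) := not_finite_iff_infinite.mp hinf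
  obtain ⟨f, hf⟩ := AddCommGroup.exists_surjective_int (Additive (Abelianization G))
  have := infinite_tensorSquare_of_surjective (f.toMultiplicativeRight.comp Abelianization.of)
    (hf.comp hof)
  exact not_finite (tensorSquare G)

/-- If `G` is finitely generated and the non-abelian tensor square `[G, G^φ]` is
finite, then `G` is finite. -/
theorem finite_of_finite_tensorSquare (G : Type u) [Group G] (hfg : Group.FG G)
    (h : Finite (tensorSquare G)) : Finite G := by
  have : Finite (commutator G) := finite_commutator_of_finite_tensorSquare G
  have : Finite (G ⧸ commutator G) := finite_abelianization_of_finite_tensorSquare G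
  exact Finite.of_subgroup_quotient (commutator G)

end TensorNu
end

section
/- Let G be a group. In ν(G), the identity [g, h^φ]^{[x, y^φ]} = [g, h^φ]^{[x, y]} holds for all g, h, x, y ∈ G. -/
namespace TensorNu

universe v

section Aux

variable {G : Type v} [Group G]

/-- The quotient map onto `ν(G)`. -/
def mkNu : FreeGroup (G ⊕ G) →* Nu G := QuotientGroup.mk' _

lemma mkNu_rel {r : FreeGroup (G ⊕ G)} (hr : r ∈ nuRels G) : mkNu r = 1 :=
  (QuotientGroup.eq_one_iff r).mpr (Subgroup.subset_normalClosure hr)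

lemma mkNu_inl (g : G) : mkNu (FreeGroup.of (Sum.inl g)) = ι G g := rfl

lemma mkNu_inr (g : G) : mkNu (FreeGroup.of (Sum.inr g)) = ιφ G g := rfl

lemma map_conj' {M N : Type*} [Group M] [Group N] (f : M →* N) (a b : M) :
    f (conj a b) = conj (f a) (f b) := by simp [conj]

lemma map_comm' {M N : Type*} [Group M] [Group N] (f : M →* N) (a b : M) :
    f (comm a b) = comm (f a) (f b) := by simp [comm]

lemma ι_mul (a b : G) : ι G a * ι G b = ι G (a * b) := by
  have h := mkNu_rel (G := G) (Or.inl ⟨a, b, rfl⟩)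
  simp only [map_mul, map_inv, mkNu_inl] at h
  exact mul_inv_eq_one.mp h

lemma ιφ_mul (a b : G) : ιφ G a * ιφ G b = ιφ G (a * b) := by
  have h := mkNu_rel (G := G) (Or.inr (Or.inl ⟨a, b, rfl⟩))
  simp only [map_mul, map_inv, mkNu_inr] at h
  exact mul_inv_eq_one.mp h

lemma ι_one : ι G 1 = 1 := by
  have h1 := ι_mul (G := G) 1 1
  rw [one_mul] at h1
  exact mul_left_cancel (a := ι G 1) (by rw [h1, mul_one])

lemma ι_inv (a : G) : (ι G a)⁻¹ = ι G a⁻¹ := by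
  apply inv_eq_of_mul_eq_one_right
  rw [ι_mul, mul_inv_cancel, ι_one]

lemma ιφ_one : ιφ G 1 = 1 := by
  have h1 := ιφ_mul (G := G) 1 1
  rw [one_mul] at h1
  exact mul_left_cancel (a := ιφ G 1) (by rw [h1, mul_one])

lemma ιφ_inv (a : G) : (ιφ G a)⁻¹ = ιφ G a⁻¹ := by
  apply inv_eq_of_mul_eq_one_right
  rw [ιφ_mul, mul_inv_cancel, ιφ_one]

/-- Relation 3: `[g₁, g₂^φ]^{g₃} = [g₁^{g₃}, (g₂^{g₃})^φ]` in `ν(G)`. -/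
lemma tconj (g₁ g₂ g₃ : G) :
    conj (comm (ι G g₁) (ιφ G g₂)) (ι G g₃) =
      comm (ι G (conj g₁ g₃)) (ιφ G (conj g₂ g₃)) := by
  have h := mkNu_rel (G := G) (Or.inr (Or.inr (Or.inl ⟨g₁, g₂, g₃, rfl⟩)))
  simp only [map_mul, map_inv, map_conj', map_comm', mkNu_inl, mkNu_inr] at h
  exact mul_inv_eq_one.mp h

/-- Relation 4: `[g₁, g₂^φ]^{g₃} = [g₁, g₂^φ]^{g₃^φ}` in `ν(G)`. -/
lemma tconjφ (g₁ g₂ g₃ : G) :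
    conj (comm (ι G g₁) (ιφ G g₂)) (ιφ G g₃) =
      conj (comm (ι G g₁) (ιφ G g₂)) (ι G g₃) := by
  have h := mkNu_rel (G := G) (Or.inr (Or.inr (Or.inr ⟨g₁, g₂, g₃, rfl⟩)))
  simp only [map_mul, map_inv, map_conj', map_comm', mkNu_inl, mkNu_inr] at h
  exact (mul_inv_eq_one.mp h).symm

/-- Conjugation by `g₃^φ` also acts diagonally on tensors. -/
lemma tconjφ' (g₁ g₂ g₃ : G) :
    conj (comm (ι G g₁) (ιφ G g₂)) (ιφ G g₃) =
      comm (ι G (conj g₁ g₃)) (ιφ G (conj g₂ g₃)) := by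
  rw [tconjφ, tconj]

lemma conj_comm_expand {M : Type*} [Group M] (t u v : M) :
    conj t (comm u v) = conj (conj (conj (conj t u⁻¹) v⁻¹) u) v := by
  simp [conj, comm, mul_assoc]

end Aux

/-- In `ν(G)`: `[g, h^φ]^{[x, y^φ]} = [g, h^φ]^{[x, y]}`. -/
theorem conj_tensor_eq_conj_comm (G : Type u) [Group G] (g h x y : G) :
    conj (comm (ι G g) (ιφ G h)) (comm (ι G x) (ιφ G y)) =
      conj (comm (ι G g) (ιφ G h)) (comm (ι G x) (ι G y)) := by
  rw [conj_comm_expand, conj_comm_expand, ι_inv, ι_inv, ιφ_inv]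
  simp only [tconj, tconjφ']

end TensorNu
end

section
/- Let G be a group, write H = [G,G^φ] ≤ ν(G), and suppose every tensor has finite conjugacy class in ν(G). Let m be the maximum over tensors x of the index of C_H(x) in H, let a be a tensor with [H : C_H(a)] = m, let b₁, …, b_m ∈ H be elements such that a^H = {a^{b₁}, …, a^{b_m}}, and let U = C_{ν(G)}(⟨b₁, …, b_m⟩). If u ∈ U and u·a is a tensor, then [H, u] ≤ [H, a]. -/
namespace TensorNu

section Conjugation

variable {K : Type*} [Group K]

def conjugatesIn (H : Subgroup K) (g : K) : Set K := {y | ∃ h ∈ H, y = conj g h}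

theorem ncard_conjugatesIn (H : Subgroup K) (g : K) :
    (conjugatesIn H g).ncard = (Subgroup.centralizer {g}).relIndex H := by
  let _ : MulAction H K := MulAction.compHom K (MulAut.conj.comp H.subtype)
  have hsmul : ∀ (h : H) (x : K), h • x = h * x * (h : K)⁻¹ := fun _ _ => rfl
  have horbit : conjugatesIn H g = MulAction.orbit H g := by
    ext y
    simp only [conjugatesIn, MulAction.mem_orbit_iff, Subtype.exists, hsmul, conj]
    constructor <;> rintro ⟨h, hh, rfl⟩ <;> exact ⟨h⁻¹, inv_mem hh, by group⟩
  have hstab : MulAction.stabilizer H g = (Subgroup.centralizer {g}).subgroupOf H := by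
    ext h
    simp only [MulAction.mem_stabilizer_iff, hsmul, Subgroup.mem_subgroupOf,
      Subgroup.mem_centralizer_singleton_iff, mul_inv_eq_iff_eq_mul]
  rw [horbit, ← MulAction.index_stabilizer, hstab, Subgroup.relIndex]

theorem conjugatesIn_subset_conjugatesOf (H : Subgroup K) (g : K) :
    conjugatesIn H g ⊆ conjugatesOf g := by
  rintro _ ⟨h, -, rfl⟩
  exact isConj_iff.mpr ⟨h⁻¹, by simp [conj]⟩

theorem conj_mul_of_commute {u b : K} (hub : Commute u b) (a : K) :
    conj (u * a) b = u * conj a b := by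
  simp only [conj, ← mul_assoc, hub.inv_right.eq]

/-- The `u * a^{b i}` are `|a^H|` distinct `H`-conjugates of `u * a`. -/
theorem conjugatesIn_mul_eq_range {H : Subgroup K} {a u : K} {ι : Type*} {b : ι → K}
    (hb : ∀ i, b i ∈ H) (hconj : conjugatesIn H a = Set.range fun i => conj a (b i))
    (hub : ∀ i, Commute u (b i)) (hfin : (conjugatesIn H (u * a)).Finite)
    (hle : (conjugatesIn H (u * a)).ncard ≤ (conjugatesIn H a).ncard) :
    conjugatesIn H (u * a) = Set.range fun i => conj (u * a) (b i) := by
  have himage : (Set.range fun i => conj (u * a) (b i)) = (u * ·) '' conjugatesIn H a := by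
    rw [hconj, ← Set.range_comp]
    exact congrArg Set.range (funext fun i => conj_mul_of_commute (hub i) a)
  have hsub : (Set.range fun i => conj (u * a) (b i)) ⊆ conjugatesIn H (u * a) := by
    rintro _ ⟨i, rfl⟩
    exact ⟨b i, hb i, rfl⟩
  refine (Set.eq_of_subset_of_ncard_le hsub ?_ hfin).symm
  rwa [himage, Set.ncard_image_of_injective _ (mul_right_injective u)]

end Conjugation

section CommSub

variable {K : Type*} [Group K]

theorem comm_mem_commSub {S : Set K} {s : K} (hs : s ∈ S) (x : K) : comm s x ∈ commSub S x :=
  Subgroup.subset_closure ⟨s, hs, rfl⟩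

theorem conj_mem_commSub {H : Subgroup K} {a w : K} (ha : a ∈ H) (hw : w ∈ commSub H a) :
    a * w * a⁻¹ ∈ commSub H a := by
  suffices commSub (H : Set K) a ≤ (commSub (H : Set K) a).comap (MulAut.conj a).toMonoidHom from
    this hw
  refine (Subgroup.closure_le _).mpr ?_
  rintro _ ⟨s, hs, rfl⟩
  have hconj : a * comm s a * a⁻¹ = comm (a * s * a⁻¹) a := by simp only [comm]; group
  show a * comm s a * a⁻¹ ∈ commSub H a
  exact hconj ▸ comm_mem_commSub (H.mul_mem (H.mul_mem ha hs) (H.inv_mem ha)) a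

theorem comm_eq_of_conj_mul_eq {a u s t : K} (htu : Commute t u)
    (h : conj (u * a) s = conj (u * a) t) :
    comm s u = a * ((comm s a)⁻¹ * comm t a) * a⁻¹ := by
  have h' := h.trans (conj_mul_of_commute htu.symm a)
  simp only [conj] at h'
  have hv : s⁻¹ * u * s = u * (t⁻¹ * a * t * (s⁻¹ * a⁻¹ * s)) := by
    calc s⁻¹ * u * s = s⁻¹ * (u * a) * s * (s⁻¹ * a⁻¹ * s) := by group
      _ = _ := by rw [h']; group
  calc comm s u = (s⁻¹ * u * s)⁻¹ * u := by simp only [comm]; group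
    _ = _ := by rw [hv]; simp only [comm]; group

theorem comm_mem_commSub_of_conj_mul_eq {H : Subgroup K} {a u s t : K} (ha : a ∈ H)
    (hs : s ∈ H) (ht : t ∈ H) (htu : Commute t u) (h : conj (u * a) s = conj (u * a) t) :
    comm s u ∈ commSub H a := by
  rw [comm_eq_of_conj_mul_eq htu h]
  exact conj_mem_commSub ha (mul_mem (inv_mem (comm_mem_commSub hs a)) (comm_mem_commSub ht a))

end CommSub

open scoped commutatorElement in
theorem tensorSet_subset_tensorSquare (G : Type u) [Group G] : tensorSet G ⊆ tensorSquare G := by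
  rintro _ ⟨p, q, rfl⟩
  have hcomm : comm (ι G p) (ιφ G q) = ⁅(ι G p)⁻¹, (ιφ G q)⁻¹⁆ := by
    simp only [comm, commutatorElement_def, inv_inv]
  rw [hcomm]
  exact Subgroup.commutator_mem_commutator (inv_mem (Subgroup.subset_closure ⟨p, rfl⟩))
    (inv_mem (Subgroup.subset_closure ⟨q, rfl⟩))

/-- Under Hypothesis 3.1: if `u ∈ U = C_{ν(G)}(⟨b₁,…,b_m⟩)` and `u·a` is a tensor,
then `[[G,G^φ], u] ≤ [[G,G^φ], a]`. -/
theorem commSub_le_of_mul_tensor (G : Type u) [Group G]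
    (hfin : ∀ x ∈ tensorSet G, (conjugatesOf x).Finite)
    (m : ℕ)
    (hm : IsGreatest {k : ℕ | ∃ x ∈ tensorSet G,
        k = (Subgroup.centralizer {x}).relIndex (tensorSquare G)} m)
    (a : Nu G) (ha : a ∈ tensorSet G)
    (haidx : (Subgroup.centralizer {a}).relIndex (tensorSquare G) = m)
    (b : Fin m → Nu G) (hb : ∀ i, b i ∈ tensorSquare G)
    (hconj : {y : Nu G | ∃ h ∈ tensorSquare G, y = conj a h} =
      Set.range fun i => conj a (b i))
    (u : Nu G)
    (hu : u ∈ Subgroup.centralizer ((Subgroup.closure (Set.range b) : Subgroup (Nu G)) : Set (Nu G)))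
    (hua : u * a ∈ tensorSet G) :
    commSub (tensorSquare G : Set (Nu G)) u ≤ commSub (tensorSquare G : Set (Nu G)) a := by
  have hub : ∀ i, Commute u (b i) := fun i =>
    (Subgroup.mem_centralizer_iff.mp hu _ (Subgroup.subset_closure ⟨i, rfl⟩)).symm
  have hle : (conjugatesIn (tensorSquare G) (u * a)).ncard ≤
      (conjugatesIn (tensorSquare G) a).ncard := by
    rw [ncard_conjugatesIn, ncard_conjugatesIn, haidx]
    exact hm.2 ⟨u * a, hua, rfl⟩
  have hclass := conjugatesIn_mul_eq_range hb hconj hub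
    ((hfin _ hua).subset (conjugatesIn_subset_conjugatesOf _ _)) hle
  refine (Subgroup.closure_le _).mpr ?_
  rintro _ ⟨s, hs, rfl⟩
  obtain ⟨i, hi⟩ : conj (u * a) s ∈ Set.range fun i => conj (u * a) (b i) :=
    hclass ▸ ⟨s, hs, rfl⟩
  exact comm_mem_commSub_of_conj_mul_eq (tensorSet_subset_tensorSquare G ha) hs (hb i)
    (hub i).symm hi.symm

end TensorNu
end

section
/- Let G = ⟨a⟩ ⋊ ⟨d⟩ be the infinite dihedral group, the semidirect product of an infinite cyclic group ⟨a⟩ by a group ⟨d⟩ of order 2 with a^d = a⁻¹. Then every commutator x = [g,h] (g, h ∈ G) satisfies |x^G| ≤ 2, yet the derived subgroup G' is infinite; in particular G is not a BFC-group. -/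
namespace TensorNu

/-- The infinite cyclic group `⟨a⟩`. -/
abbrev ZMul : Type := Multiplicative ℤ

/-- The group `⟨d⟩` of order `2`, where `d` is the inversion automorphism
`a ↦ a⁻¹` of the infinite cyclic group. -/
def invC2Z : Subgroup (MulAut ZMul) := Subgroup.zpowers (MulEquiv.inv ZMul)

/-- The infinite dihedral group `G = ⟨a⟩ ⋊ ⟨d⟩`, with `a^d = a⁻¹`. -/
abbrev InfDihedral : Type := ZMul ⋊[invC2Z.subtype] invC2Z

/-!
When `G` is abelian every commutator of `N ⋊ G` lies in `N`; when `N` is abelian too, conjugation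
acts on `N` through `G` alone, so a commutator has at most `|G|` conjugates, here `|⟨d⟩| = 2`.
On the other hand `a^n d a^{-n} = a^{2n} d`, so `d` has infinitely many conjugates, and
`[a^n, d] = a^{2n}` shows that `G'` is infinite.
-/

lemma comm_eq_one_of_commute {K : Type*} [Group K] {x y : K} (h : Commute x y) :
    comm x y = 1 := by
  rw [comm, mul_assoc, h.eq, ← mul_inv_rev, inv_mul_cancel]

end TensorNu

namespace SemidirectProduct

open TensorNu

lemma comm_eq_inl_left {N G : Type*} [Group N] [Group G] [IsMulCommutative G]
    {φ : G →* MulAut N} (g h : N ⋊[φ] G) : comm g h = inl (comm g h).left := by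
  have hright : (comm g h).right = 1 :=
    comm_eq_one_of_commute (isMulCommutative_iff.mp ‹_› g.right h.right)
  conv_lhs => rw [← inl_left_mul_inr_right (comm g h), hright, map_one, mul_one]

variable {N G : Type*} [CommGroup N] [Group G] {φ : G →* MulAut N}

lemma mul_inl_mul_inv (g : N ⋊[φ] G) (a : N) : g * inl a * g⁻¹ = inl (φ g.right a) := by
  ext <;> simp

lemma conjugatesOf_inl_subset_range (a : N) :
    conjugatesOf (inl a : N ⋊[φ] G) ⊆ Set.range fun σ => inl (φ σ a) := by
  intro x hx
  obtain ⟨g, rfl⟩ := isConj_iff.mp hx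
  exact ⟨g.right, (mul_inl_mul_inv g a).symm⟩

variable [IsMulCommutative G] [Finite G]

lemma finite_conjugatesOf_comm (g h : N ⋊[φ] G) : (conjugatesOf (comm g h)).Finite := by
  rw [comm_eq_inl_left]
  exact (Set.finite_range _).subset (conjugatesOf_inl_subset_range _)

lemma card_conjugatesOf_comm_le (g h : N ⋊[φ] G) :
    Nat.card (conjugatesOf (comm g h)) ≤ Nat.card G := by
  rw [comm_eq_inl_left]
  exact (Nat.card_mono (Set.finite_range _) (conjugatesOf_inl_subset_range _)).trans
    (Finite.card_range_le _)

end SemidirectProduct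

namespace TensorNu

open SemidirectProduct

def reflection : invC2Z := ⟨MulEquiv.inv ZMul, Subgroup.mem_zpowers _⟩

lemma mulEquivInv_sq : MulEquiv.inv ZMul ^ 2 = 1 := by
  ext x
  exact inv_inv x

lemma card_invC2Z_le_two : Nat.card invC2Z ≤ 2 := by
  rw [invC2Z, Nat.card_zpowers]
  exact orderOf_le_of_pow_eq_one two_pos mulEquivInv_sq

instance : IsMulCommutative invC2Z :=
  Subgroup.zpowers_isMulCommutative _

instance : Finite invC2Z :=
  (isOfFinOrder_iff_pow_eq_one.mpr ⟨2, two_pos, mulEquivInv_sq⟩).finite_zpowers.to_subtype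

lemma inl_mul_inr_reflection_mul_inv (b : ZMul) :
    inl b * inr reflection * (inl b)⁻¹ = (inl (b ^ 2) * inr reflection : InfDihedral) := by
  ext <;> simp [reflection, pow_two]

open scoped commutatorElement in
lemma inl_sq_mem_commutator (b : ZMul) :
    (inl (b ^ 2) : InfDihedral) ∈ commutator InfDihedral := by
  have h : ⁅(inl b : InfDihedral), (inr reflection : InfDihedral)⁆ = inl (b ^ 2) := by
    rw [commutatorElement_def, inl_mul_inr_reflection_mul_inv, mul_inv_cancel_right]
  rw [← h, commutator_def]
  exact Subgroup.commutator_mem_commutator (Subgroup.mem_top _) (Subgroup.mem_top _)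

lemma infinite_commutator : Infinite (commutator InfDihedral) :=
  Infinite.of_injective (fun b => ⟨inl (b ^ 2), inl_sq_mem_commutator b⟩)
    fun _ _ h => pow_left_injective two_ne_zero (inl_injective (congrArg Subtype.val h))

lemma infinite_conjugatesOf_inr_reflection :
    (conjugatesOf (inr reflection : InfDihedral)).Infinite :=
  Set.infinite_of_injective_forall_mem (f := fun b : ZMul => inl (b ^ 2) * inr reflection)
    (fun _ _ h => pow_left_injective two_ne_zero
      (by simpa [-map_pow] using congrArg SemidirectProduct.left h))
    fun b => isConj_iff.mpr ⟨inl b, inl_mul_inr_reflection_mul_inv b⟩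

/-- In the infinite dihedral group, every commutator has at most `2` conjugates,
yet the derived subgroup is infinite; in particular `G` is not a BFC-group. -/
theorem infDihedral_commutators_bounded_not_BFC :
    (∀ g h : InfDihedral, (conjugatesOf (comm g h)).Finite ∧
        Nat.card (conjugatesOf (comm g h)) ≤ 2) ∧
    Infinite (commutator InfDihedral) ∧
    ¬ ∃ k : ℕ, ∀ x : InfDihedral,
        (conjugatesOf x).Finite ∧ Nat.card (conjugatesOf x) ≤ k := by
  refine ⟨fun g h => ⟨finite_conjugatesOf_comm g h, ?_⟩, infinite_commutator, ?_⟩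
  · exact (card_conjugatesOf_comm_le g h).trans card_invC2Z_le_two
  · rintro ⟨k, hk⟩
    exact infinite_conjugatesOf_inr_reflection (hk _).1

end TensorNu
end
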